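/- For i = 1, …, N let S_i be an N-by-k 0–1 selection matrix, X_i an m-by-k data matrix, Q_i an m-by-d matrix with orthonormal columns, and Θ_i = Q_i^T X_i (I_k − (1/k) e e^T). Suppose for each i that X_i (I_k − (1/k) e e^T) = (J_i T_i* + Δ_i + E_i*)(I_k − (1/k) e e^T), where J_i is m-by-d, T_i* = T* S_i for a d-by-N matrix T* with T*(T*)^T = I_d, and that P_i = Q_i^T J_i is nonsingular. If a d-by-N matrix T with T T^T = I_d and d-by-d matrices L_1, …, L_N minimize the total alignment error Σ_{i=1}^N ‖T S_i (I_k − (1/k) e e^T) − L_i Θ_i‖_F^2 over all such T and L_i, then, with E_i = T S_i (I_k − (1/k) e e^T) − L_i Θ_i, one has Σ_{i=1}^N ‖E_i‖_F^2 ≤ Σ_{i=1}^N ‖P_i^{-1}‖_2^2 (‖Δ_i‖_F + ‖E_i*‖_F)^2. -/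

import Mathlib

open Matrix

/-- Frobenius norm of a real matrix. -/
noncomputable def frob {α β : Type*} [Fintype α] [Fintype β] (A : Matrix α β ℝ) : ℝ :=
  Real.sqrt (∑ i, ∑ j, (A i j) ^ 2)

/-- Spectral (operator 2-) norm of a real matrix. -/
noncomputable def spec {α β : Type*} [Fintype α] [Fintype β] [DecidableEq β]
    (A : Matrix α β ℝ) : ℝ :=
  ‖LinearMap.toContinuousLinearMap (Matrix.toEuclideanLin A)‖

section helpers

variable {α β γ : Type*} [Fintype α] [Fintype β] [Fintype γ]

lemma frob_nonneg (A : Matrix α β ℝ) : 0 ≤ frob A := Real.sqrt_nonneg _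

lemma frob_sq (A : Matrix α β ℝ) : frob A ^ 2 = ∑ i, ∑ j, A i j ^ 2 :=
  Real.sq_sqrt (by positivity)

lemma spec_nonneg [DecidableEq β] (A : Matrix α β ℝ) : 0 ≤ spec A := norm_nonneg _

lemma le_of_sq_le_sq_aux {a b : ℝ} (ha : 0 ≤ a) (hb : 0 ≤ b) (h : a ^ 2 ≤ b ^ 2) : a ≤ b := by
  nlinarith

lemma frob_neg (A : Matrix α β ℝ) : frob (-A) = frob A := by
  simp [frob]

lemma frob_eq_norm (A : Matrix α β ℝ) :
    frob A = ‖((WithLp.equiv 2 (α × β → ℝ)).symm fun p => A p.1 p.2 :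
      EuclideanSpace ℝ (α × β))‖ := by
  rw [EuclideanSpace.norm_eq]
  simp [frob, Fintype.sum_prod_type, Real.norm_eq_abs, sq_abs]

lemma frob_add_le (A B : Matrix α β ℝ) : frob (A + B) ≤ frob A + frob B := by
  rw [frob_eq_norm, frob_eq_norm, frob_eq_norm]
  have e : ((WithLp.equiv 2 (α × β → ℝ)).symm fun p => (A + B) p.1 p.2 : EuclideanSpace ℝ (α × β))
      = ((WithLp.equiv 2 (α × β → ℝ)).symm fun p => A p.1 p.2 : EuclideanSpace ℝ (α × β))
        + ((WithLp.equiv 2 (α × β → ℝ)).symm fun p => B p.1 p.2 : EuclideanSpace ℝ (α × β)) := by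
    ext p; simp
  rw [e]
  exact norm_add_le _ _

lemma mulVec_sq_sum_le [DecidableEq β] (A : Matrix α β ℝ) (v : β → ℝ) :
    ∑ i, (A.mulVec v i) ^ 2 ≤ spec A ^ 2 * ∑ j, v j ^ 2 := by
  set x : EuclideanSpace ℝ β := (WithLp.equiv 2 _).symm v with hxdef
  have h := (LinearMap.toContinuousLinearMap (Matrix.toEuclideanLin A)).le_opNorm x
  have hx : ‖x‖ = Real.sqrt (∑ j, v j ^ 2) := by
    rw [EuclideanSpace.norm_eq]
    simp [hxdef, Real.norm_eq_abs, sq_abs]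
  have hAx : ‖LinearMap.toContinuousLinearMap (Matrix.toEuclideanLin A) x‖
      = Real.sqrt (∑ i, (A.mulVec v i) ^ 2) := by
    rw [LinearMap.coe_toContinuousLinearMap']
    rw [hxdef, Matrix.toEuclideanLin_apply]
    rw [EuclideanSpace.norm_eq]
    simp [Real.norm_eq_abs, sq_abs]
  rw [hAx, hx] at h
  have h2 := pow_le_pow_left₀ (Real.sqrt_nonneg _) h 2
  rw [Real.sq_sqrt (by positivity), mul_pow, Real.sq_sqrt (by positivity)] at h2
  exact h2

lemma frob_mul_le [DecidableEq β] (A : Matrix α β ℝ) (B : Matrix β γ ℝ) :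
    frob (A * B) ≤ spec A * frob B := by
  refine le_of_sq_le_sq_aux (frob_nonneg _)
    (mul_nonneg (spec_nonneg _) (frob_nonneg _)) ?_
  rw [frob_sq, mul_pow, frob_sq, Finset.sum_comm]
  calc ∑ j, ∑ i, ((A * B) i j) ^ 2
      = ∑ j, ∑ i, (A.mulVec (fun l => B l j) i) ^ 2 := by
        simp [Matrix.mul_apply, Matrix.mulVec, dotProduct]
    _ ≤ ∑ j, spec A ^ 2 * ∑ l, (B l j) ^ 2 :=
        Finset.sum_le_sum fun j _ => mulVec_sq_sum_le A _
    _ = spec A ^ 2 * ∑ l, ∑ j, (B l j) ^ 2 := by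
        rw [← Finset.mul_sum, Finset.sum_comm]

lemma proj_sq_sum_le [DecidableEq α] (P : Matrix α α ℝ) (hsym : Pᵀ = P)
    (hidem : P * P = P) (v : α → ℝ) :
    ∑ i, (P.mulVec v i) ^ 2 ≤ ∑ i, v i ^ 2 := by
  set u := P.mulVec v with hu
  have h1 : ∑ i, u i ^ 2 = ∑ i, v i * u i := by
    have : u ⬝ᵥ u = v ⬝ᵥ u := by
      rw [hu]
      rw [show (P.mulVec v) ⬝ᵥ (P.mulVec v) = (v ᵥ* Pᵀ) ⬝ᵥ (P.mulVec v) by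
        rw [Matrix.vecMul_transpose]]
      rw [← Matrix.dotProduct_mulVec, Matrix.mulVec_mulVec, hsym, hidem]
    simpa [dotProduct, sq] using this
  have cs := Finset.sum_mul_sq_le_sq_mul_sq Finset.univ v u
  have ha : (0:ℝ) ≤ ∑ i, u i ^ 2 := by positivity
  rcases eq_or_lt_of_le ha with h0 | h0
  · rw [← h0]; positivity
  · have : (∑ i, u i ^ 2) * (∑ i, u i ^ 2) ≤ (∑ i, v i ^ 2) * (∑ i, u i ^ 2) := by
      nlinarith [cs, h1]
    exact le_of_mul_le_mul_right this h0
  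
lemma orth_sq_sum_le [DecidableEq α] [DecidableEq β] (Q : Matrix α β ℝ)
    (hQ : Qᵀ * Q = 1) (c : α → ℝ) :
    ∑ j, ((Qᵀ).mulVec c j) ^ 2 ≤ ∑ i, c i ^ 2 := by
  set P := Q * Qᵀ with hPdef
  have hsym : Pᵀ = P := by rw [hPdef, Matrix.transpose_mul, Matrix.transpose_transpose]
  have hidem : P * P = P := by
    rw [hPdef, Matrix.mul_assoc, ← Matrix.mul_assoc Qᵀ, hQ, Matrix.one_mul]
  have h1 : ∑ j, ((Qᵀ).mulVec c j) ^ 2 = ∑ i, (P.mulVec c i) ^ 2 := by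
    have e1 : ((Qᵀ).mulVec c) ⬝ᵥ ((Qᵀ).mulVec c) = c ⬝ᵥ (P.mulVec c) := by
      rw [show ((Qᵀ).mulVec c) ⬝ᵥ ((Qᵀ).mulVec c) = (c ᵥ* Q) ⬝ᵥ ((Qᵀ).mulVec c) by
        rw [← Matrix.vecMul_transpose, Matrix.transpose_transpose]]
      rw [← Matrix.dotProduct_mulVec, Matrix.mulVec_mulVec]
    have e2 : c ⬝ᵥ (P.mulVec c) = (P.mulVec c) ⬝ᵥ (P.mulVec c) := by
      rw [show (P.mulVec c) ⬝ᵥ (P.mulVec c) = (c ᵥ* Pᵀ) ⬝ᵥ (P.mulVec c) by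
        rw [Matrix.vecMul_transpose]]
      rw [← Matrix.dotProduct_mulVec, Matrix.mulVec_mulVec, hsym, hidem]
    have := e1.trans e2
    simpa [dotProduct, sq] using this
  rw [h1]
  exact proj_sq_sum_le P hsym hidem c

lemma frob_orth_left [DecidableEq α] [DecidableEq β] (Q : Matrix α β ℝ)
    (hQ : Qᵀ * Q = 1) (M : Matrix α γ ℝ) :
    frob (Qᵀ * M) ≤ frob M := by
  refine le_of_sq_le_sq_aux (frob_nonneg _) (frob_nonneg _) ?_
  rw [frob_sq, frob_sq, Finset.sum_comm, Finset.sum_comm (s := Finset.univ) (t := Finset.univ)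
    (f := fun i j => M i j ^ 2)]
  refine Finset.sum_le_sum fun j _ => ?_
  have := orth_sq_sum_le Q hQ (fun l => M l j)
  calc ∑ i, ((Qᵀ * M) i j) ^ 2
      = ∑ i, ((Qᵀ).mulVec (fun l => M l j) i) ^ 2 := by
        simp [Matrix.mul_apply, Matrix.mulVec, dotProduct]
    _ ≤ ∑ l, (M l j) ^ 2 := this

lemma frob_proj_right [DecidableEq β] (M : Matrix α β ℝ) (P : Matrix β β ℝ)
    (hsym : Pᵀ = P) (hidem : P * P = P) :
    frob (M * P) ≤ frob M := by
  refine le_of_sq_le_sq_aux (frob_nonneg _) (frob_nonneg _) ?_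
  rw [frob_sq, frob_sq]
  refine Finset.sum_le_sum fun i _ => ?_
  have := proj_sq_sum_le P hsym hidem (fun l => M i l)
  have hPe : ∀ a b, P a b = P b a := fun a b => by
    rw [show P a b = Pᵀ b a from rfl, hsym]
  calc ∑ j, ((M * P) i j) ^ 2
      = ∑ j, (P.mulVec (fun l => M i l) j) ^ 2 := by
        refine Finset.sum_congr rfl fun j _ => ?_
        simp only [Matrix.mul_apply, Matrix.mulVec, dotProduct]
        congr 1
        exact Finset.sum_congr rfl fun x _ => by rw [hPe x j, mul_comm]
    _ ≤ ∑ j, (M i j) ^ 2 := this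

end helpers

/-- With `C = I − (1/k) e eᵀ`, selection matrices `S_i`, `Θ_i = Q_iᵀ X_i C`, local
expansions `X_i C = (J_i T* S_i + Δ_i + E_i*) C` where `T* (T*)ᵀ = I` and
`P_i = Q_iᵀ J_i` nonsingular: if `T` (with `T Tᵀ = I`) and the `L_i` minimize the total
alignment error `Σ_i ‖T S_i C − L_i Θ_i‖_F²`, then with `E_i = T S_i C − L_i Θ_i` one has
`Σ_i ‖E_i‖_F² ≤ Σ_i ‖P_i⁻¹‖₂² (‖Δ_i‖_F + ‖E_i*‖_F)²`. -/
theorem stmt_9 (N m d k : ℕ)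
    (S : Fin N → Matrix (Fin N) (Fin k) ℝ)
    (g : Fin N → Fin k → Fin N) (hg : ∀ i, Function.Injective (g i))
    (hS : ∀ i a b, S i a b = if a = g i b then (1 : ℝ) else 0)
    (X : Fin N → Matrix (Fin m) (Fin k) ℝ)
    (Q : Fin N → Matrix (Fin m) (Fin d) ℝ) (hQ : ∀ i, (Q i)ᵀ * Q i = 1)
    (C : Matrix (Fin k) (Fin k) ℝ)
    (hC : C = (1 : Matrix (Fin k) (Fin k) ℝ) -
        (k : ℝ)⁻¹ • vecMulVec (fun _ => (1 : ℝ)) (fun _ => (1 : ℝ)))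
    (J : Fin N → Matrix (Fin m) (Fin d) ℝ)
    (Tstar : Matrix (Fin d) (Fin N) ℝ) (hTstar : Tstar * Tstarᵀ = 1)
    (Δ Estar : Fin N → Matrix (Fin m) (Fin k) ℝ)
    (hX : ∀ i, X i * C = (J i * (Tstar * S i) + Δ i + Estar i) * C)
    (hP : ∀ i, IsUnit ((Q i)ᵀ * J i).det)
    (T : Matrix (Fin d) (Fin N) ℝ) (hT : T * Tᵀ = 1)
    (L : Fin N → Matrix (Fin d) (Fin d) ℝ)
    (hmin : ∀ (T' : Matrix (Fin d) (Fin N) ℝ) (L' : Fin N → Matrix (Fin d) (Fin d) ℝ),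
        T' * T'ᵀ = 1 →
        (∑ i, frob (T * S i * C - L i * ((Q i)ᵀ * X i * C)) ^ 2) ≤
          ∑ i, frob (T' * S i * C - L' i * ((Q i)ᵀ * X i * C)) ^ 2) :
    (∑ i, frob (T * S i * C - L i * ((Q i)ᵀ * X i * C)) ^ 2) ≤
      ∑ i, spec (((Q i)ᵀ * J i)⁻¹) ^ 2 * (frob (Δ i) + frob (Estar i)) ^ 2 := by
  -- C is a symmetric idempotent
  have hCsym : Cᵀ = C := by
    rw [hC]
    ext i j
    simp [Matrix.transpose_apply, Matrix.sub_apply, Matrix.smul_apply, Matrix.one_apply,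
      vecMulVec_apply, eq_comm]
  have hCidem : C * C = C := by
    rcases Nat.eq_zero_or_pos k with hk | hk
    · subst hk; apply Subsingleton.elim
    · have hk' : (k : ℝ) ≠ 0 := by positivity
      ext i j
      rw [hC]
      simp only [Matrix.mul_apply, Matrix.sub_apply, Matrix.smul_apply, Matrix.one_apply,
        vecMulVec_apply, smul_eq_mul, mul_one]
      rw [Finset.sum_congr rfl (fun l _ => by ring_nf :
        ∀ l ∈ Finset.univ, ((if i = l then (1:ℝ) else 0) - (k:ℝ)⁻¹) *
          ((if l = j then (1:ℝ) else 0) - (k:ℝ)⁻¹) =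
          (if i = l then (1:ℝ) else 0) * (if l = j then (1:ℝ) else 0)
          - (k:ℝ)⁻¹ * (if i = l then (1:ℝ) else 0)
          - (k:ℝ)⁻¹ * (if l = j then (1:ℝ) else 0) + (k:ℝ)⁻¹ * (k:ℝ)⁻¹)]
      simp only [Finset.sum_add_distrib, Finset.sum_sub_distrib, ← Finset.mul_sum,
        Finset.sum_ite_eq, Finset.sum_ite_eq', Finset.mem_univ, if_true, mul_one,
        Finset.sum_const, Finset.card_univ, Fintype.card_fin, nsmul_eq_mul, ite_mul, one_mul,
        zero_mul]
      field_simp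
      all_goals ring
  -- inverse of P i
  have hPinv : ∀ i, (((Q i)ᵀ * J i)⁻¹) * ((Q i)ᵀ * J i) = 1 :=
    fun i => Matrix.nonsing_inv_mul _ (hP i)
  -- key identity for the candidate (Tstar, P⁻¹)
  have key : ∀ i, Tstar * S i * C - (((Q i)ᵀ * J i)⁻¹) * ((Q i)ᵀ * X i * C)
      = -((((Q i)ᵀ * J i)⁻¹) * ((Q i)ᵀ * ((Δ i + Estar i) * C))) := by
    intro i
    have h1 : (Q i)ᵀ * X i * C
        = ((Q i)ᵀ * J i) * (Tstar * S i * C) + (Q i)ᵀ * ((Δ i + Estar i) * C) := by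
      rw [Matrix.mul_assoc, hX i]
      rw [show (J i * (Tstar * S i) + Δ i + Estar i) * C
          = J i * (Tstar * S i) * C + (Δ i + Estar i) * C by
        rw [Matrix.add_mul, Matrix.add_mul, Matrix.add_mul]; abel]
      rw [Matrix.mul_add]
      congr 1
      simp only [Matrix.mul_assoc]
    rw [h1, Matrix.mul_add, ← Matrix.mul_assoc, hPinv i, Matrix.one_mul]
    abel
  -- pointwise bound for the candidate error
  have hbound : ∀ i, frob (Tstar * S i * C - (((Q i)ᵀ * J i)⁻¹) * ((Q i)ᵀ * X i * C))
      ≤ spec (((Q i)ᵀ * J i)⁻¹) * (frob (Δ i) + frob (Estar i)) := by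
    intro i
    rw [key i, frob_neg]
    calc frob ((((Q i)ᵀ * J i)⁻¹) * ((Q i)ᵀ * ((Δ i + Estar i) * C)))
        ≤ spec (((Q i)ᵀ * J i)⁻¹) * frob ((Q i)ᵀ * ((Δ i + Estar i) * C)) :=
          frob_mul_le _ _
      _ ≤ spec (((Q i)ᵀ * J i)⁻¹) * frob ((Δ i + Estar i) * C) :=
          mul_le_mul_of_nonneg_left (frob_orth_left (Q i) (hQ i) _) (spec_nonneg _)
      _ ≤ spec (((Q i)ᵀ * J i)⁻¹) * frob (Δ i + Estar i) :=
          mul_le_mul_of_nonneg_left (frob_proj_right _ C hCsym hCidem) (spec_nonneg _)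
      _ ≤ spec (((Q i)ᵀ * J i)⁻¹) * (frob (Δ i) + frob (Estar i)) :=
          mul_le_mul_of_nonneg_left (frob_add_le _ _) (spec_nonneg _)
  calc (∑ i, frob (T * S i * C - L i * ((Q i)ᵀ * X i * C)) ^ 2)
      ≤ ∑ i, frob (Tstar * S i * C - (((Q i)ᵀ * J i)⁻¹) * ((Q i)ᵀ * X i * C)) ^ 2 :=
        hmin Tstar (fun i => ((Q i)ᵀ * J i)⁻¹) hTstar
    _ ≤ ∑ i, spec (((Q i)ᵀ * J i)⁻¹) ^ 2 * (frob (Δ i) + frob (Estar i)) ^ 2 := by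
        refine Finset.sum_le_sum fun i _ => ?_
        rw [← mul_pow]
        exact pow_le_pow_left₀ (frob_nonneg _) (hbound i) 2
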